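/- arXiv:2502.02146 — 2 statements merged into one kernel-verified Lean document; each statement's English description precedes it below -/
import Mathlib

section
/- Let V be a real normed vector space, Q a real inner product space, and b : V × Q → ℝ a bilinear map. Let p̄, p₀ ∈ Q with ⟨p̄, p₀⟩ = 0 and set p := p̄ + p₀. Let u₀, ū ∈ V and constants γ₀, α, β, B > 0 satisfy: (i) b(u₀, p̄) = 0; (ii) b(u₀, p₀) ≥ γ₀·‖u₀‖·‖p₀‖; (iii) b(ū, p̄) ≥ α·‖p̄‖; (iv) |b(ū, p₀)| ≤ β·‖p₀‖; (v) ‖ū‖ ≤ B. Define u := u₀ + (γ₀·‖u₀‖/(2β))·ū. Then b(u, p) ≥ (γ₀/2)·min(1, α/β)·‖u₀‖·‖p‖, and ‖u‖ ≤ (1 + γ₀·B/(2β))·‖u₀‖, and consequently b(u, p) ≥ γ·‖u‖·‖p‖ with γ := (γ₀/2)·min(1, α/β)·(1 + γ₀·B/(2β))⁻¹. -/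
/-- Abstract algebraic core of the inf-sup argument for Stokes with outflow
boundary condition (Braack–Richter). -/
theorem stmt_0 {V Q : Type*} [NormedAddCommGroup V] [NormedSpace ℝ V]
    [NormedAddCommGroup Q] [InnerProductSpace ℝ Q]
    (b : V →ₗ[ℝ] Q →ₗ[ℝ] ℝ)
    (pbar p₀ : Q) (horth : inner ℝ pbar p₀ = (0 : ℝ))
    (u₀ ubar : V) (γ₀ α β B : ℝ)
    (hγ₀ : 0 < γ₀) (hα : 0 < α) (hβ : 0 < β) (hB : 0 < B)
    (h1 : b u₀ pbar = 0)
    (h2 : b u₀ p₀ ≥ γ₀ * ‖u₀‖ * ‖p₀‖)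
    (h3 : b ubar pbar ≥ α * ‖pbar‖)
    (h4 : |b ubar p₀| ≤ β * ‖p₀‖)
    (h5 : ‖ubar‖ ≤ B) :
    b (u₀ + (γ₀ * ‖u₀‖ / (2 * β)) • ubar) (pbar + p₀) ≥
      γ₀ / 2 * min 1 (α / β) * ‖u₀‖ * ‖pbar + p₀‖ ∧
    ‖u₀ + (γ₀ * ‖u₀‖ / (2 * β)) • ubar‖ ≤ (1 + γ₀ * B / (2 * β)) * ‖u₀‖ ∧
    b (u₀ + (γ₀ * ‖u₀‖ / (2 * β)) • ubar) (pbar + p₀) ≥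
      (γ₀ / 2 * min 1 (α / β) * (1 + γ₀ * B / (2 * β))⁻¹) *
        ‖u₀ + (γ₀ * ‖u₀‖ / (2 * β)) • ubar‖ * ‖pbar + p₀‖ := by
  set t := γ₀ * ‖u₀‖ / (2 * β) with ht
  have ht0 : 0 ≤ t := by positivity
  have hu0 : (0:ℝ) ≤ ‖u₀‖ := norm_nonneg _
  have hbu : b (u₀ + t • ubar) (pbar + p₀) =
      b u₀ pbar + b u₀ p₀ + t * b ubar pbar + t * b ubar p₀ := by
    simp only [map_add, LinearMap.add_apply, map_smul, LinearMap.smul_apply,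
      smul_eq_mul]
    ring
  have hm1 : min 1 (α/β) ≤ 1 := min_le_left _ _
  have hm2 : min 1 (α/β) ≤ α/β := min_le_right _ _
  have hm0 : (0:ℝ) ≤ min 1 (α/β) := le_min zero_le_one (by positivity)
  have hnp : ‖pbar + p₀‖ ≤ ‖pbar‖ + ‖p₀‖ := norm_add_le _ _
  have hnp0 : (0:ℝ) ≤ ‖pbar + p₀‖ := norm_nonneg _
  have hpb0 : (0:ℝ) ≤ ‖pbar‖ := norm_nonneg _
  have hp00 : (0:ℝ) ≤ ‖p₀‖ := norm_nonneg _
  have htβ : t * β = γ₀ * ‖u₀‖ / 2 := by rw [ht]; field_simp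
  have htα : t * α = γ₀ / 2 * (α / β) * ‖u₀‖ := by rw [ht]; field_simp
  have key : b (u₀ + t • ubar) (pbar + p₀) ≥
      γ₀ / 2 * min 1 (α / β) * ‖u₀‖ * ‖pbar + p₀‖ := by
    rw [hbu, h1]
    have e1 : t * (α * ‖pbar‖) ≤ t * b ubar pbar :=
      mul_le_mul_of_nonneg_left h3 ht0
    have e4 : -(β * ‖p₀‖) ≤ b ubar p₀ := neg_le_of_abs_le h4
    have e2 : -(t * (β * ‖p₀‖)) ≤ t * b ubar p₀ := by
      have := mul_le_mul_of_nonneg_left e4 ht0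
      linarith [this]
    have rhs_le : γ₀ / 2 * min 1 (α / β) * ‖u₀‖ * ‖pbar + p₀‖ ≤
        γ₀ / 2 * (α / β) * ‖u₀‖ * ‖pbar‖ + γ₀ / 2 * ‖u₀‖ * ‖p₀‖ := by
      have h6 : γ₀ / 2 * min 1 (α / β) * ‖u₀‖ * ‖pbar + p₀‖ ≤
          γ₀ / 2 * min 1 (α / β) * ‖u₀‖ * (‖pbar‖ + ‖p₀‖) := by
        apply mul_le_mul_of_nonneg_left hnp
        positivity
      have h7 : γ₀ / 2 * min 1 (α / β) * ‖u₀‖ * ‖pbar‖ ≤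
          γ₀ / 2 * (α / β) * ‖u₀‖ * ‖pbar‖ := by
        apply mul_le_mul_of_nonneg_right _ hpb0
        have h7a := mul_le_mul_of_nonneg_right hm2 hu0
        have h7b := mul_le_mul_of_nonneg_left h7a (by positivity : (0:ℝ) ≤ γ₀/2)
        linarith [h7b]
      have h8 : γ₀ / 2 * min 1 (α / β) * ‖u₀‖ * ‖p₀‖ ≤
          γ₀ / 2 * ‖u₀‖ * ‖p₀‖ := by
        apply mul_le_mul_of_nonneg_right _ hp00
        have h8a := mul_le_mul_of_nonneg_right hm1 hu0
        have h8b := mul_le_mul_of_nonneg_left h8a (by positivity : (0:ℝ) ≤ γ₀/2)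
        linarith [h8b]
      linarith [h6, h7, h8]
    have eA : t * (α * ‖pbar‖) = γ₀ / 2 * (α / β) * ‖u₀‖ * ‖pbar‖ := by
      rw [show t * (α * ‖pbar‖) = (t * α) * ‖pbar‖ from by ring, htα]
    have eB : t * (β * ‖p₀‖) = γ₀ * ‖u₀‖ / 2 * ‖p₀‖ := by
      rw [show t * (β * ‖p₀‖) = (t * β) * ‖p₀‖ from by ring, htβ]
    linarith [e1, e2, h2, rhs_le, eA, eB]
  have hnorm : ‖u₀ + t • ubar‖ ≤ (1 + γ₀ * B / (2 * β)) * ‖u₀‖ := by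
    have h6 : ‖u₀ + t • ubar‖ ≤ ‖u₀‖ + t * ‖ubar‖ := by
      calc ‖u₀ + t • ubar‖ ≤ ‖u₀‖ + ‖t • ubar‖ := norm_add_le _ _
        _ = ‖u₀‖ + |t| * ‖ubar‖ := by rw [norm_smul, Real.norm_eq_abs]
        _ = ‖u₀‖ + t * ‖ubar‖ := by rw [abs_of_nonneg ht0]
    have h7 : t * ‖ubar‖ ≤ t * B := mul_le_mul_of_nonneg_left h5 ht0
    have h8 : t * B = γ₀ * B / (2 * β) * ‖u₀‖ := by rw [ht]; field_simp
    linarith [h6, h7, h8]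
  refine ⟨key, hnorm, ?_⟩
  set D := (1 + γ₀ * B / (2 * β)) with hD
  have hD0 : 0 < D := by positivity
  set C := γ₀ / 2 * min 1 (α / β) with hC
  have hC0 : 0 ≤ C := by positivity
  have h9 : C * D⁻¹ * ‖u₀ + t • ubar‖ * ‖pbar + p₀‖ ≤ C * ‖u₀‖ * ‖pbar + p₀‖ := by
    apply mul_le_mul_of_nonneg_right _ hnp0
    have : D⁻¹ * ‖u₀ + t • ubar‖ ≤ ‖u₀‖ := by
      rw [inv_mul_le_iff₀ hD0]
      linarith [hnorm, mul_comm D ‖u₀‖]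
    calc C * D⁻¹ * ‖u₀ + t • ubar‖ = C * (D⁻¹ * ‖u₀ + t • ubar‖) := by ring
      _ ≤ C * ‖u₀‖ := mul_le_mul_of_nonneg_left this hC0
  linarith [key, h9]
end

section
/- Let V be a real normed vector space, Q a real inner product space, and b : V × Q → ℝ a bilinear map. Let V₀ ⊆ V be a linear subspace with V₀ ≠ {0}, Q₀ ⊆ Q a linear subspace, and q̂ ∈ Q a vector with ‖q̂‖ = 1 and ⟨q̂, q₀⟩ = 0 for all q₀ ∈ Q₀, such that every p ∈ Q can be written as p = c·q̂ + p₀ with c ∈ ℝ and p₀ ∈ Q₀. Assume: (i) b(u₀, q̂) = 0 for all u₀ ∈ V₀; (ii) there is γ₀ > 0 such that for every p₀ ∈ Q₀ there exists u₀ ∈ V₀ with u₀ ≠ 0 and b(u₀, p₀) ≥ γ₀·‖u₀‖·‖p₀‖; (iii) there exist ū ∈ V and constants α, β, B > 0 with b(ū, q̂) ≥ α, |b(ū, q₀)| ≤ β·‖q₀‖ for all q₀ ∈ Q₀, and ‖ū‖ ≤ B. Then the inf-sup condition holds on V × Q: for every p ∈ Q with p ≠ 0, sup over u ∈ V, u ≠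 0, of b(u, p)/‖u‖ is at least γ·‖p‖, where γ := (γ₀/2)·min(1, α/β)·(1 + γ₀·B/(2β))⁻¹ > 0. -/
set_option maxHeartbeats 1000000


/-- Abstract (normed/inner-product space) formulation of the main theorem:
the inf-sup condition on V × Q derived from the classical inf-sup condition
on V₀ × Q₀ together with an auxiliary field ū controlling the constant
pressure direction q̂ (Braack–Richter, Stokes with outflow condition). -/
theorem stmt_1 {V Q : Type*} [NormedAddCommGroup V] [NormedSpace ℝ V]
    [NormedAddCommGroup Q] [InnerProductSpace ℝ Q]
    (b : V →ₗ[ℝ] Q →ₗ[ℝ] ℝ)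
    (V₀ : Submodule ℝ V) (hV₀ : V₀ ≠ ⊥)
    (Q₀ : Submodule ℝ Q) (qhat : Q) (hqhat : ‖qhat‖ = 1)
    (horth : ∀ q₀ ∈ Q₀, inner ℝ qhat q₀ = (0 : ℝ))
    (hdecomp : ∀ p : Q, ∃ (c : ℝ) (p₀ : Q), p₀ ∈ Q₀ ∧ p = c • qhat + p₀)
    (h1 : ∀ u₀ ∈ V₀, b u₀ qhat = 0)
    (γ₀ : ℝ) (hγ₀ : 0 < γ₀)
    (h2 : ∀ p₀ ∈ Q₀, ∃ u₀ ∈ V₀, u₀ ≠ 0 ∧ b u₀ p₀ ≥ γ₀ * ‖u₀‖ * ‖p₀‖)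
    (ubar : V) (α β B : ℝ) (hα : 0 < α) (hβ : 0 < β) (hB : 0 < B)
    (h3 : b ubar qhat ≥ α)
    (h4 : ∀ q₀ ∈ Q₀, |b ubar q₀| ≤ β * ‖q₀‖)
    (h5 : ‖ubar‖ ≤ B) :
    0 < γ₀ / 2 * min 1 (α / β) * (1 + γ₀ * B / (2 * β))⁻¹ ∧
    ∀ p : Q, p ≠ 0 → ∃ u : V, u ≠ 0 ∧
      b u p / ‖u‖ ≥
        (γ₀ / 2 * min 1 (α / β) * (1 + γ₀ * B / (2 * β))⁻¹) * ‖p‖ := by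
  have hm : 0 < min 1 (α / β) := lt_min one_pos (div_pos hα hβ)
  have hD : 0 < 1 + γ₀ * B / (2 * β) := by positivity
  have hγpos : 0 < γ₀ / 2 * min 1 (α / β) * (1 + γ₀ * B / (2 * β))⁻¹ := by
    have := inv_pos.mpr hD
    positivity
  refine ⟨hγpos, ?_⟩
  intro p hp
  obtain ⟨c, p₀, hp₀Q, hpe⟩ := hdecomp p
  set n := ‖p‖ with hn_def
  have hn : 0 < n := norm_pos_iff.mpr hp
  set r := ‖p₀‖ with hr_def
  have hr : 0 ≤ r := norm_nonneg p₀
  have hip : inner ℝ qhat p₀ = (0 : ℝ) := horth _ hp₀Q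
  -- Pythagoras: n² = c² + r²
  have hnorm : n ^ 2 = c ^ 2 + r ^ 2 := by
    have h := norm_add_sq_real (c • qhat) p₀
    rw [← hpe] at h
    have h1' : ‖c • qhat‖ = |c| := by
      rw [norm_smul, hqhat]; simp [Real.norm_eq_abs]
    have h2' : inner ℝ (c • qhat) p₀ = (0 : ℝ) := by
      rw [real_inner_smul_left, hip, mul_zero]
    rw [h1', h2'] at h
    rw [← hn_def, ← hr_def] at h
    rw [h, sq_abs]; ring
  -- n ≤ |c| + r
  have hcn : n ≤ |c| + r := by
    nlinarith [abs_nonneg c, sq_abs c, hn.le]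
  -- scale u₀
  obtain ⟨u₀', hu₀'V, hu₀'ne, hu₀'b⟩ := h2 p₀ hp₀Q
  have hu₀'pos : 0 < ‖u₀'‖ := norm_pos_iff.mpr hu₀'ne
  set u₀ : V := (n / ‖u₀'‖) • u₀' with hu₀_def
  have hu₀V : u₀ ∈ V₀ := Submodule.smul_mem _ _ hu₀'V
  have hu₀norm : ‖u₀‖ = n := by
    rw [hu₀_def, norm_smul, Real.norm_eq_abs, abs_of_pos (div_pos hn hu₀'pos)]
    field_simp
  have hb0 : b u₀ p₀ ≥ γ₀ * n * r := by
    have : b u₀ p₀ = (n / ‖u₀'‖) * b u₀' p₀ := by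
      rw [hu₀_def, map_smul]; simp
    rw [this]
    have h := mul_le_mul_of_nonneg_left hu₀'b (le_of_lt (div_pos hn hu₀'pos))
    calc γ₀ * n * r = (n / ‖u₀'‖) * (γ₀ * ‖u₀'‖ * r) := by field_simp
      _ ≤ (n / ‖u₀'‖) * b u₀' p₀ := h
  have hbq0 : b u₀ qhat = 0 := h1 u₀ hu₀V
  -- the sign and the coefficient
  set s : ℝ := if 0 ≤ c then 1 else -1 with hs_def
  have hsc : s * c = |c| := by
    by_cases h : 0 ≤ c
    · simp [hs_def, h, abs_of_nonneg h]
    · push_neg at h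
      simp [hs_def, not_le.mpr h, abs_of_neg h]
  have habs_s : |s| = 1 := by
    by_cases h : 0 ≤ c <;> simp [hs_def, h]
  set t : ℝ := s * (γ₀ * n / (2 * β)) with ht_def
  have ht_abs : |t| = γ₀ * n / (2 * β) := by
    rw [ht_def, abs_mul, habs_s, one_mul, abs_of_pos (by positivity)]
  have htc : t * c = |c| * (γ₀ * n / (2 * β)) := by
    rw [ht_def]; rw [← hsc]; ring
  set u : V := u₀ + t • ubar with hu_def
  -- expansion of b u p
  have hexp : b u p = b u₀ p₀ + t * c * b ubar qhat + t * b ubar p₀ := by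
    rw [hu_def, hpe]
    simp only [map_add, map_smul, LinearMap.add_apply, LinearMap.smul_apply,
      smul_eq_mul, hbq0]
    ring
  -- lower bound on the numerator
  have hterm2 : |c| * (γ₀ * n / (2 * β)) * α ≤ t * c * b ubar qhat := by
    rw [htc, mul_assoc, mul_assoc]
    exact mul_le_mul_of_nonneg_left
      (mul_le_mul_of_nonneg_left h3 (by positivity)) (abs_nonneg c)
  have hterm3 : -(γ₀ * n / (2 * β) * (β * r)) ≤ t * b ubar p₀ := by
    have habs : |t * b ubar p₀| ≤ γ₀ * n / (2 * β) * (β * r) := by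
      rw [abs_mul, ht_abs]
      exact mul_le_mul_of_nonneg_left (h4 p₀ hp₀Q) (by positivity)
    linarith [neg_abs_le (t * b ubar p₀)]
  set m : ℝ := min 1 (α / β) with hm_def
  have hm1 : m ≤ 1 := min_le_left _ _
  have hm2 : m ≤ α / β := min_le_right _ _
  -- numerator lower bound
  have hnum : γ₀ / 2 * m * n * n ≤ b u p := by
    rw [hexp]
    have key : γ₀ / 2 * m * n * n ≤
        γ₀ * n * r + |c| * (γ₀ * n / (2 * β)) * α - γ₀ * n / (2 * β) * (β * r) := by
      have e1 : γ₀ * n * r + |c| * (γ₀ * n / (2 * β)) * α - γ₀ * n / (2 * β) * (β * r)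
          = γ₀ / 2 * n * (r + |c| * (α / β)) := by
        field_simp; ring
      rw [e1]
      have h2' : m * n ≤ r + |c| * (α / β) := by
        have ha : m * |c| ≤ |c| * (α / β) := by
          rw [mul_comm]
          exact mul_le_mul_of_nonneg_left hm2 (abs_nonneg c)
        have hb' : m * r ≤ r := mul_le_of_le_one_left hr hm1
        have hc' : m * n ≤ m * (|c| + r) := mul_le_mul_of_nonneg_left hcn hm.le
        linarith
      calc γ₀ / 2 * m * n * n = γ₀ / 2 * n * (m * n) := by ring
        _ ≤ γ₀ / 2 * n * (r + |c| * (α / β)) :=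
            mul_le_mul_of_nonneg_left h2' (by positivity)
    linarith [hterm2, hterm3, hb0]
  have hnumpos : 0 < b u p := lt_of_lt_of_le (by positivity) hnum
  -- u ≠ 0
  have hune : u ≠ 0 := by
    intro h
    rw [h] at hnumpos
    simp at hnumpos
  have hupos : 0 < ‖u‖ := norm_pos_iff.mpr hune
  -- denominator upper bound
  have hden : ‖u‖ ≤ (1 + γ₀ * B / (2 * β)) * n := by
    calc ‖u‖ ≤ ‖u₀‖ + ‖t • ubar‖ := norm_add_le _ _
      _ = n + |t| * ‖ubar‖ := by rw [hu₀norm, norm_smul, Real.norm_eq_abs]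
      _ ≤ n + γ₀ * n / (2 * β) * B := by
          rw [ht_abs]
          have := mul_le_mul_of_nonneg_left h5 (show (0:ℝ) ≤ γ₀ * n / (2 * β) by positivity)
          linarith
      _ = (1 + γ₀ * B / (2 * β)) * n := by ring
  refine ⟨u, hune, ?_⟩
  have hfinal : γ₀ / 2 * m * (1 + γ₀ * B / (2 * β))⁻¹ * n
      = (γ₀ / 2 * m * n * n) / ((1 + γ₀ * B / (2 * β)) * n) := by
    field_simp
  rw [ge_iff_le, hfinal]
  exact div_le_div₀ hnumpos.le hnum hupos hden
end
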